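/- arXiv:2505.08595 — 7 statements merged into one kernel-verified Lean document; each statement's English description precedes it below -/
import Mathlib

section
/- Let 0 < R0 < R1, Φ ∈ [0, 1/2], μ ∈ ℝ, and let u : [R0, R1] → ℝ be a C² function satisfying -u'' - (1/r)u' + (Φ²/r²)u = μ u on (R0, R1), with u(R0) = 0, u'(R1) = 0, and u > 0 on (R0, R1). Then u' > 0 on (R0, R1), i.e., u is strictly increasing. -/
theorem stmt_0 (R0 R1 Φ μ : ℝ) (hR0 : 0 < R0) (hR : R0 < R1)
    (hΦ : Φ ∈ Set.Icc (0:ℝ) (1/2)) (u : ℝ → ℝ) (hu : ContDiff ℝ 2 u)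
    (hode : ∀ r ∈ Set.Ioo R0 R1,
      -(deriv (deriv u) r) - (1/r) * deriv u r + (Φ^2/r^2) * u r = μ * u r)
    (hD : u R0 = 0) (hN : deriv u R1 = 0)
    (hpos : ∀ r ∈ Set.Ioo R0 R1, 0 < u r) :
    ∀ r ∈ Set.Ioo R0 R1, 0 < deriv u r := by
  have hud : Differentiable ℝ u := hu.differentiable (by norm_num)
  have hud2 : Differentiable ℝ (deriv u) := by
    have hu' : ContDiff ℝ (1 + 1) u := by rw [one_add_one_eq_two]; exact hu
    exact (contDiff_succ_iff_deriv.mp hu').2.2.differentiable (by norm_num)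
  set v : ℝ → ℝ := fun r => r * deriv u r with hvdef
  have hvd : Differentiable ℝ v := differentiable_id.mul hud2
  have hvc : Continuous v := hvd.continuous
  have hderiv : ∀ r ∈ Set.Ioo R0 R1, deriv v r = (Φ^2/r - μ*r) * u r := by
    intro r hr
    have hr0 : 0 < r := lt_trans hR0 hr.1
    have h1 : HasDerivAt v (1 * deriv u r + r * deriv (deriv u) r) r :=
      (hasDerivAt_id r).mul ((hud2 r).hasDerivAt)
    have h2 := hode r hr
    have h3 : deriv (deriv u) r = (Φ^2/r^2 - μ) * u r - (1/r) * deriv u r := by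
      ring_nf at h2 ⊢
      linarith
    rw [h1.deriv, h3]
    field_simp
    ring
  intro s hs
  have hs0 : 0 < s := lt_trans hR0 hs.1
  -- helper: u' cannot be ≤ 0 on an initial interval
  have key : ∀ s' ∈ Set.Ioc R0 R1, (∀ r ∈ Set.Ioo R0 s', deriv u r ≤ 0) → False := by
    intro s' hs' hle
    set x := (R0 + s')/2 with hxdef
    have hx1 : R0 < x := by simp only [hxdef]; linarith [hs'.1]
    have hx2 : x < s' := by simp only [hxdef]; linarith [hs'.1]
    have hxR1 : x < R1 := lt_of_lt_of_le hx2 hs'.2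
    obtain ⟨c, hc, hceq⟩ := exists_deriv_eq_slope u hx1
      hud.continuous.continuousOn hud.differentiableOn
    have hcle : deriv u c ≤ 0 := hle c ⟨hc.1, lt_trans hc.2 hx2⟩
    have hxx : 0 < x - R0 := by linarith
    have hux : 0 < u x := hpos x ⟨hx1, hxR1⟩
    rw [hceq, hD] at hcle
    nlinarith [hcle, div_mul_cancel₀ (u x - 0) (ne_of_gt hxx)]
  by_cases hμ : μ ≤ 0
  · exfalso
    have hmono : MonotoneOn v (Set.Icc R0 R1) := by
      apply monotoneOn_of_deriv_nonneg (convex_Icc R0 R1) hvc.continuousOn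
        (fun x _ => (hvd x).differentiableWithinAt)
      intro x hx
      rw [interior_Icc] at hx
      rw [hderiv x hx]
      have hx0 : 0 < x := lt_trans hR0 hx.1
      have h1 : 0 ≤ Φ^2/x := div_nonneg (sq_nonneg Φ) hx0.le
      have h2 : μ * x ≤ 0 := mul_nonpos_of_nonpos_of_nonneg hμ hx0.le
      exact mul_nonneg (by linarith) (hpos x hx).le
    apply key R1 ⟨hR, le_rfl⟩
    intro r hr
    have hr0 : 0 < r := lt_trans hR0 hr.1
    have hvr : v r ≤ v R1 :=
      hmono ⟨hr.1.le, hr.2.le⟩ ⟨hR.le, le_rfl⟩ hr.2.le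
    have hvR1 : v R1 = 0 := by simp [hvdef, hN]
    rw [hvR1] at hvr
    have hvr' : r * deriv u r ≤ 0 := hvr
    nlinarith [hvr']
  · push_neg at hμ
    by_cases hg : 0 ≤ Φ^2/s - μ*s
    · by_contra hvs
      push_neg at hvs
      have hsm : StrictMonoOn v (Set.Icc R0 s) := by
        apply strictMonoOn_of_deriv_pos (convex_Icc R0 s) hvc.continuousOn
        intro x hx
        rw [interior_Icc] at hx
        have hx0 : 0 < x := lt_trans hR0 hx.1
        have hxIoo : x ∈ Set.Ioo R0 R1 := ⟨hx.1, lt_trans hx.2 hs.2⟩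
        rw [hderiv x hxIoo]
        have h1 : Φ^2/s ≤ Φ^2/x :=
          div_le_div_of_nonneg_left (sq_nonneg Φ) hx0 hx.2.le
        have h2 : μ * x < μ * s := by nlinarith [hx.2]
        exact mul_pos (by linarith) (hpos x hxIoo)
      apply key s ⟨hs.1, hs.2.le⟩
      intro r hr
      have hr0 : 0 < r := lt_trans hR0 hr.1
      have hvlt : v r < v s :=
        hsm ⟨hr.1.le, hr.2.le⟩ ⟨hs.1.le, le_rfl⟩ hr.2
      have hvlt' : r * deriv u r < s * deriv u s := hvlt
      have hvsle : s * deriv u s ≤ 0 := mul_nonpos_of_nonneg_of_nonpos hs0.le hvs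
      nlinarith [hvlt', hvsle]
    · push_neg at hg
      have hsa : StrictAntiOn v (Set.Icc s R1) := by
        apply strictAntiOn_of_deriv_neg (convex_Icc s R1) hvc.continuousOn
        intro x hx
        rw [interior_Icc] at hx
        have hx0 : 0 < x := lt_trans hs0 hx.1
        have hxIoo : x ∈ Set.Ioo R0 R1 := ⟨lt_trans hs.1 hx.1, hx.2⟩
        rw [hderiv x hxIoo]
        have h1 : Φ^2/x ≤ Φ^2/s :=
          div_le_div_of_nonneg_left (sq_nonneg Φ) hs0 hx.1.le
        have h2 : μ * s < μ * x := by nlinarith [hx.1]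
        exact mul_neg_of_neg_of_pos (by linarith) (hpos x hxIoo)
      have hvlt : v R1 < v s :=
        hsa ⟨le_rfl, hs.2.le⟩ ⟨hs.2.le, le_rfl⟩ hs.2
      have hvR1 : v R1 = 0 := by simp [hvdef, hN]
      rw [hvR1] at hvlt
      have hvlt' : 0 < s * deriv u s := hvlt
      nlinarith [hvlt']
end

section
/- Let 0 < R0 < R1, Φ ∈ [0, 1/2], μ > 0, and let u : [R0, R1] → ℝ be a C² function satisfying -u'' - (1/r)u' + (Φ²/r²)u = μ u on (R0, R1), with u > 0 and u' ≥ 0 on (R0, R1). Define U(r) = u'(r)² + (Φ²/r²) u(r)². Then U'(r) ≤ -2 (u'(r)²/r)(1 - Φ²) - (2Φ²/r³)(u(r) - r u'(r))² for all r ∈ (R0, R1); in particular U is strictly decreasing on (R0, R1) wherever u' > 0. -/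
theorem stmt_1 (R0 R1 Φ μ : ℝ) (hR0 : 0 < R0) (hR : R0 < R1)
    (hΦ : Φ ∈ Set.Icc (0:ℝ) (1/2)) (hμ : 0 < μ) (u : ℝ → ℝ) (hu : ContDiff ℝ 2 u)
    (hode : ∀ r ∈ Set.Ioo R0 R1,
      -(deriv (deriv u) r) - (1/r) * deriv u r + (Φ^2/r^2) * u r = μ * u r)
    (hpos : ∀ r ∈ Set.Ioo R0 R1, 0 < u r)
    (hmono : ∀ r ∈ Set.Ioo R0 R1, 0 ≤ deriv u r)
    (U : ℝ → ℝ) (hU : ∀ r, U r = (deriv u r)^2 + (Φ^2/r^2) * (u r)^2) :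
    ∀ r ∈ Set.Ioo R0 R1,
      deriv U r ≤ -2 * ((deriv u r)^2 / r) * (1 - Φ^2)
          - (2*Φ^2/r^3) * (u r - r * deriv u r)^2
      ∧ (0 < deriv u r → deriv U r < 0) := by
  intro r hr
  have hrpos : 0 < r := lt_trans hR0 hr.1
  have hrne : r ≠ 0 := ne_of_gt hrpos
  set a := u r with ha
  set b := deriv u r with hb
  set c := deriv (deriv u) r with hc
  have hu2 : ContDiff ℝ ((1:ℕ)+1) u := by
    exact_mod_cast hu
  have hdu : Differentiable ℝ u := hu.differentiable (by norm_num)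
  have hddu : ContDiff ℝ 1 (deriv u) := (contDiff_succ_iff_deriv.mp hu2).2.2
  have hdu' : Differentiable ℝ (deriv u) := hddu.differentiable (by norm_num)
  have hd1 : HasDerivAt u b r := (hdu r).hasDerivAt
  have hd2 : HasDerivAt (deriv u) c r := (hdu' r).hasDerivAt
  -- derivative of U
  have hfun : U = fun x => (deriv u x)^2 + (Φ^2/x^2) * (u x)^2 := funext hU
  have h1 : HasDerivAt (fun x => (deriv u x)^2) (2*b*c) r := by
    simpa [Pi.pow_def] using hd2.pow 2
  have hdiv : HasDerivAt (fun x : ℝ => Φ^2 / x^2)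
      ((0 * r^2 - Φ^2 * (2 * r^(2-1))) / (r^2)^2) r :=
    (hasDerivAt_const r (Φ^2)).div (hasDerivAt_pow 2 r) (pow_ne_zero 2 hrne)
  have hsq : HasDerivAt (fun x => (u x)^2) (2*a*b) r := by
    simpa [Pi.pow_def] using hd1.pow 2
  have h2 : HasDerivAt (fun x => (Φ^2/x^2) * (u x)^2)
      ((0 * r^2 - Φ^2 * (2 * r^(2-1))) / (r^2)^2 * a^2 + (Φ^2/r^2) * (2*a*b)) r :=
    hdiv.mul hsq
  have hUd : HasDerivAt U
      (2*b*c + ((0 * r^2 - Φ^2 * (2 * r^(2-1))) / (r^2)^2 * a^2 + (Φ^2/r^2) * (2*a*b))) r := by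
    rw [hfun]; exact h1.add h2
  have hcval : c = -(1/r)*b + (Φ^2/r^2)*a - μ*a := by
    have := hode r hr; linarith
  have hderU : deriv U r = -2*b^2/r + 4*Φ^2*a*b/r^2 - 2*Φ^2*a^2/r^3 - 2*μ*a*b := by
    rw [hUd.deriv, hcval]
    field_simp
    ring
  have hRHS : -2 * (b^2 / r) * (1 - Φ^2) - (2*Φ^2/r^3) * (a - r * b)^2
      = -2*b^2/r + 4*Φ^2*a*b/r^2 - 2*Φ^2*a^2/r^3 := by
    field_simp
    ring
  have hab : 0 ≤ 2*μ*a*b :=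
    mul_nonneg (mul_nonneg (by linarith) (hpos r hr).le) (hmono r hr)
  constructor
  · rw [hderU, hRHS]; linarith
  · intro hbpos
    have hΦ1 : Φ^2 < 1 := by nlinarith [hΦ.1, hΦ.2]
    have hΦ1' : 0 < 1 - Φ^2 := by linarith
    have t1 : 0 < 2 * (b^2 / r) * (1 - Φ^2) :=
      mul_pos (by positivity) hΦ1'
    have t2 : 0 ≤ (2*Φ^2/r^3) * (a - r * b)^2 := by positivity
    have := hRHS
    rw [hderU]; linarith
end

section
/- Let 0 < R0 < R1, Φ ∈ (0, 1/2], λ ∈ ℝ, and let u : [R0, R1] → ℝ be a C² function satisfying -u'' - (1/r)u' + (Φ²/r²)u = λ u on (R0, R1), with Neumann conditions u'(R0) = 0 = u'(R1), and u > 0 on (R0, R1). Then λ > 0, the point r* = Φ/√λ lies in the open interval (R0, R1), and u'(r) > 0 for all r ∈ (R0, R1). -/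
theorem stmt_2 (R0 R1 Φ lam : ℝ) (hR0 : 0 < R0) (hR : R0 < R1)
    (hΦ : Φ ∈ Set.Ioc (0:ℝ) (1/2)) (u : ℝ → ℝ) (hu : ContDiff ℝ 2 u)
    (hode : ∀ r ∈ Set.Ioo R0 R1,
      -(deriv (deriv u) r) - (1/r) * deriv u r + (Φ^2/r^2) * u r = lam * u r)
    (hN0 : deriv u R0 = 0) (hN1 : deriv u R1 = 0)
    (hpos : ∀ r ∈ Set.Ioo R0 R1, 0 < u r) :
    0 < lam ∧ Φ / Real.sqrt lam ∈ Set.Ioo R0 R1 ∧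
      ∀ r ∈ Set.Ioo R0 R1, 0 < deriv u r := by
  have hΦ0 : 0 < Φ := hΦ.1
  set N : ℝ → ℝ := fun r => r * deriv u r with hNdef
  have hu2 : ContDiff ℝ (1 + 1) u := by norm_num; exact hu
  have hdu : ContDiff ℝ 1 (deriv u) := (contDiff_succ_iff_deriv.mp hu2).2.2
  have hduD : Differentiable ℝ (deriv u) := hdu.differentiable one_ne_zero
  have hNderiv : ∀ r : ℝ, HasDerivAt N (deriv u r + r * deriv (deriv u) r) r := by
    intro r
    have h1 := (hasDerivAt_id r).mul ((hduD r).hasDerivAt)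
    simp only [id, one_mul] at h1
    exact h1
  have hNcont : Continuous N := continuous_id.mul hdu.continuous
  have hNR0 : N R0 = 0 := by simp [hNdef, hN0]
  have hNR1 : N R1 = 0 := by simp [hNdef, hN1]
  have hderivN : ∀ r ∈ Set.Ioo R0 R1, deriv N r = (Φ^2 - lam * r^2) / r * u r := by
    intro r hr
    have hr0 : 0 < r := lt_trans hR0 hr.1
    have hode' := hode r hr
    have h2 : deriv (deriv u) r = -(1/r) * deriv u r + (Φ^2/r^2) * u r - lam * u r := by
      linarith
    rw [(hNderiv r).deriv, h2]
    field_simp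
    ring
  have hsign_pos : ∀ r ∈ Set.Ioo R0 R1, lam * r^2 < Φ^2 → 0 < deriv N r := by
    intro r hr hk
    have hr0 : 0 < r := lt_trans hR0 hr.1
    rw [hderivN r hr]
    exact mul_pos (div_pos (by linarith) hr0) (hpos r hr)
  have hsign_neg : ∀ r ∈ Set.Ioo R0 R1, Φ^2 < lam * r^2 → deriv N r < 0 := by
    intro r hr hk
    have hr0 : 0 < r := lt_trans hR0 hr.1
    rw [hderivN r hr]
    exact mul_neg_of_neg_of_pos (div_neg_of_neg_of_pos (by linarith) hr0) (hpos r hr)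
  have hmono : ∀ a b, R0 ≤ a → b ≤ R1 → a < b →
      (∀ s ∈ Set.Ioo a b, lam * s^2 < Φ^2) → N a < N b := by
    intro a b ha hb hab hkey
    have hsm : StrictMonoOn N (Set.Icc a b) := by
      apply strictMonoOn_of_deriv_pos (convex_Icc a b) hNcont.continuousOn
      intro s hs
      rw [interior_Icc] at hs
      exact hsign_pos s ⟨lt_of_le_of_lt ha hs.1, lt_of_lt_of_le hs.2 hb⟩ (hkey s hs)
    exact hsm (Set.left_mem_Icc.mpr hab.le) (Set.right_mem_Icc.mpr hab.le) hab
  have hanti : ∀ a b, R0 ≤ a → b ≤ R1 → a < b →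
      (∀ s ∈ Set.Ioo a b, Φ^2 < lam * s^2) → N b < N a := by
    intro a b ha hb hab hkey
    have hsm : StrictAntiOn N (Set.Icc a b) := by
      apply strictAntiOn_of_deriv_neg (convex_Icc a b) hNcont.continuousOn
      intro s hs
      rw [interior_Icc] at hs
      exact hsign_neg s ⟨lt_of_le_of_lt ha hs.1, lt_of_lt_of_le hs.2 hb⟩ (hkey s hs)
    exact hsm (Set.left_mem_Icc.mpr hab.le) (Set.right_mem_Icc.mpr hab.le) hab
  have hlam : 0 < lam := by
    by_contra h
    push_neg at h
    have hkey : ∀ s ∈ Set.Ioo R0 R1, lam * s^2 < Φ^2 := by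
      intro s hs
      have h1 : lam * s^2 ≤ 0 := mul_nonpos_of_nonpos_of_nonneg h (sq_nonneg s)
      nlinarith [pow_pos hΦ0 2]
    have := hmono R0 R1 le_rfl le_rfl hR hkey
    rw [hNR0, hNR1] at this
    exact lt_irrefl 0 this
  set rs : ℝ := Φ / Real.sqrt lam with hrsdef
  have hsqrt : 0 < Real.sqrt lam := Real.sqrt_pos.mpr hlam
  have hrs0 : 0 < rs := div_pos hΦ0 hsqrt
  have hrs_sq : lam * rs^2 = Φ^2 := by
    rw [hrsdef, div_pow, Real.sq_sqrt hlam.le]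
    field_simp
  have hlt : ∀ s : ℝ, 0 < s → s < rs → lam * s^2 < Φ^2 := by
    intro s hs h
    nlinarith [mul_pos hlam (mul_pos (sub_pos.mpr h) (show (0:ℝ) < rs + s by linarith))]
  have hgt : ∀ s : ℝ, rs < s → Φ^2 < lam * s^2 := by
    intro s h
    nlinarith [mul_pos hlam (mul_pos (sub_pos.mpr h) (show (0:ℝ) < s + rs by linarith))]
  have hrsR1 : rs < R1 := by
    by_contra h
    push_neg at h
    have hkey : ∀ s ∈ Set.Ioo R0 R1, lam * s^2 < Φ^2 := fun s hs =>
      hlt s (lt_trans hR0 hs.1) (lt_of_lt_of_le hs.2 h)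
    have := hmono R0 R1 le_rfl le_rfl hR hkey
    rw [hNR0, hNR1] at this
    exact lt_irrefl 0 this
  have hrsR0 : R0 < rs := by
    by_contra h
    push_neg at h
    have hkey : ∀ s ∈ Set.Ioo R0 R1, Φ^2 < lam * s^2 := fun s hs =>
      hgt s (lt_of_le_of_lt h hs.1)
    have := hanti R0 R1 le_rfl le_rfl hR hkey
    rw [hNR0, hNR1] at this
    exact lt_irrefl 0 this
  refine ⟨hlam, ⟨hrsR0, hrsR1⟩, ?_⟩
  intro r hr
  have hr0 : 0 < r := lt_trans hR0 hr.1
  have hNr : 0 < N r := by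
    rcases le_total r rs with hcase | hcase
    · have := hmono R0 r le_rfl hr.2.le hr.1 (fun s hs =>
        hlt s (lt_trans hR0 hs.1) (lt_of_lt_of_le hs.2 hcase))
      rw [hNR0] at this
      exact this
    · have := hanti r R1 hr.1.le le_rfl hr.2 (fun s hs =>
        hgt s (lt_of_le_of_lt hcase hs.1))
      rw [hNR1] at this
      exact this
  have : 0 < r * deriv u r := hNr
  by_contra hc
  push_neg at hc
  nlinarith [mul_nonpos_of_nonneg_of_nonpos hr0.le hc]
end

section
/- Let Ω, ω ⊂ ℝ² be bounded measurable sets with closure(ω) ⊂ Ω, and let Ω*, ω* be concentric open disks centered at the origin of radii R1 > R0 > 0 with |Ω| = |Ω*| and ω = ω*. Set Ω₀ = Ω \ closure(ω) and Ω₀* = Ω* \ closure(ω*). Let u : [R0, R1] → ℝ be continuous, nondecreasing, with u(R0) = 0 and u ≥ 0, and define f : ℝ² → ℝ by f(x) = 0 for |x| ≤ R0, f(x) = u(|x|) for R0 < |x| < R1, and f(x) = u(R1) for |x| ≥ R1. Then ∫_{Ω₀} f² dx ≥ ∫_{Ω₀*} u(|x|)² dx. Moreover, if additionally u is strictly increasing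 on (R0, R1) and |Ω \ Ω*| > 0, then the inequality is strict. -/
set_option maxHeartbeats 1000000


open MeasureTheory Metric

abbrev E2 := EuclideanSpace ℝ (Fin 2)

theorem stmt_5 (R0 R1 : ℝ) (hR0 : 0 < R0) (hR : R0 < R1)
    (Ω : Set E2) (hΩm : MeasurableSet Ω) (hΩb : Bornology.IsBounded Ω)
    (hsub : closure (ball (0:E2) R0) ⊆ Ω)
    (hvol : volume Ω = volume (ball (0:E2) R1))
    (u : ℝ → ℝ) (hcont : ContinuousOn u (Set.Icc R0 R1))
    (hmono : MonotoneOn u (Set.Icc R0 R1)) (h0 : u R0 = 0)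
    (hnn : ∀ r ∈ Set.Icc R0 R1, 0 ≤ u r)
    (f : E2 → ℝ)
    (hf : ∀ x, f x = if ‖x‖ ≤ R0 then 0 else if ‖x‖ < R1 then u ‖x‖ else u R1) :
    (∫ x in Ω \ closure (ball (0:E2) R0), (f x)^2) ≥
      (∫ x in ball (0:E2) R1 \ closure (ball (0:E2) R0), (u ‖x‖)^2)
    ∧ (StrictMonoOn u (Set.Ioo R0 R1) → 0 < volume (Ω \ ball (0:E2) R1) →
      (∫ x in Ω \ closure (ball (0:E2) R0), (f x)^2) >
        (∫ x in ball (0:E2) R1 \ closure (ball (0:E2) R0), (u ‖x‖)^2)) := by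
  have hR01 : R0 ≤ R1 := hR.le
  set K := closure (ball (0:E2) R0) with hKdef
  have hKc : K = closedBall (0:E2) R0 := closure_ball 0 (ne_of_gt hR0)
  have hKm : MeasurableSet K := isClosed_closure.measurableSet
  have hKsubB1 : K ⊆ ball (0:E2) R1 := by
    rw [hKc]; exact closedBall_subset_ball hR
  set A := Ω \ K with hAdef
  set B := ball (0:E2) R1 \ K with hBdef
  have hAm : MeasurableSet A := hΩm.diff hKm
  have hBm : MeasurableSet B := measurableSet_ball.diff hKm
  -- f is continuous
  have hmem : ∀ r : ℝ, max R0 (min r R1) ∈ Set.Icc R0 R1 := fun r =>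
    ⟨le_max_left _ _, max_le hR01 (min_le_right _ _)⟩
  have hfv : ∀ x : E2, f x = u (max R0 (min ‖x‖ R1)) := by
    intro x
    rw [hf]
    rcases le_or_gt ‖x‖ R0 with h1 | h1
    · rw [if_pos h1, min_eq_left (h1.trans hR01), max_eq_left h1, h0]
    · rw [if_neg (not_le.mpr h1)]
      rcases lt_or_ge ‖x‖ R1 with h2 | h2
      · rw [if_pos h2, min_eq_left h2.le, max_eq_right h1.le]
      · rw [if_neg (not_lt.mpr h2), min_eq_right h2, max_eq_right hR01]
  have hfcont : Continuous f := by
    have : Continuous fun x : E2 => u (max R0 (min ‖x‖ R1)) :=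
      hcont.comp_continuous
        (continuous_const.max (continuous_norm.min continuous_const))
        (fun x => hmem ‖x‖)
    exact (funext hfv : f = _) ▸ this
  -- norms of points of B
  have hBnorm : ∀ x ∈ B, R0 < ‖x‖ ∧ ‖x‖ < R1 := by
    intro x hx
    constructor
    · by_contra h
      exact hx.2 (hKc ▸ mem_closedBall_zero_iff.mpr (not_lt.mp h))
    · exact mem_ball_zero_iff.mp hx.1
  -- on B, f x = u ‖x‖
  have hfB : Set.EqOn (fun x : E2 => (u ‖x‖)^2) (fun x => (f x)^2) B := by
    intro x hx
    obtain ⟨h1, h2⟩ := hBnorm x hx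
    simp only [hf, if_neg (not_le.mpr h1), if_pos h2]
  -- A \ B = Ω \ ball R1
  have hADB : A \ B = Ω \ ball (0:E2) R1 := by
    ext x
    simp only [hAdef, hBdef, Set.mem_diff, Set.mem_diff]
    constructor
    · rintro ⟨⟨hxΩ, hxK⟩, hxB⟩
      refine ⟨hxΩ, fun hb => hxB ⟨hb, hxK⟩⟩
    · rintro ⟨hxΩ, hxb⟩
      exact ⟨⟨hxΩ, fun hk => hxb (hKsubB1 hk)⟩, fun hb => hxb hb.1⟩
  -- f = u R1 on A \ B
  have hfAB : ∀ x ∈ A \ B, (f x)^2 = (u R1)^2 := by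
    intro x hx
    rw [hADB] at hx
    have hx1 : R1 ≤ ‖x‖ := not_lt.mp (fun h => hx.2 (mem_ball_zero_iff.mpr h))
    rw [hf, if_neg (not_le.mpr (hR.trans_le hx1)), if_neg (not_lt.mpr hx1)]
  -- measures
  have hΩfin : volume Ω ≠ ⊤ := hΩb.measure_lt_top.ne
  have hKfin : volume K ≠ ⊤ := (hKc ▸ (isCompact_closedBall (0:E2) R0).measure_lt_top).ne
  have hAvol : volume A = volume Ω - volume K :=
    measure_diff hsub hKm.nullMeasurableSet hKfin
  have hBvol : volume B = volume (ball (0:E2) R1) - volume K :=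
    measure_diff hKsubB1 hKm.nullMeasurableSet hKfin
  have hAB : volume A = volume B := by rw [hAvol, hBvol, hvol]
  have hAfin : volume A ≠ ⊤ := fun h => hΩfin (top_le_iff.mp (h ▸ measure_mono Set.diff_subset))
  have h1 : volume (A ∩ B) + volume (A \ B) = volume A := measure_inter_add_diff A hBm
  have h2 : volume (B ∩ A) + volume (B \ A) = volume B := measure_inter_add_diff B hAm
  have hABfin : volume (A ∩ B) ≠ ⊤ :=
    fun h => hAfin (top_le_iff.mp (h ▸ measure_mono Set.inter_subset_left))
  have hdiffeq : volume (A \ B) = volume (B \ A) := by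
    have : volume (A ∩ B) + volume (A \ B) = volume (A ∩ B) + volume (B \ A) := by
      rw [h1, hAB, ← h2, Set.inter_comm]
    exact (ENNReal.add_right_inj hABfin).mp this
  have hdifffin : volume (A \ B) ≠ ⊤ :=
    fun h => hAfin (top_le_iff.mp (h ▸ measure_mono Set.diff_subset))
  -- integrability
  obtain ⟨M, hM⟩ := hΩb.subset_closedBall 0
  set M' := max M R1 with hM'def
  have hAsub : A ⊆ closedBall (0:E2) M' :=
    (Set.diff_subset.trans hM).trans (closedBall_subset_closedBall (le_max_left _ _))
  have hBsub : B ⊆ closedBall (0:E2) M' :=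
    (Set.diff_subset.trans ball_subset_closedBall).trans
      (closedBall_subset_closedBall (le_max_right _ _))
  have hint : IntegrableOn (fun x => (f x)^2) (closedBall (0:E2) M') :=
    ((hfcont.pow 2).continuousOn).integrableOn_compact (isCompact_closedBall _ _)
  have hintA : IntegrableOn (fun x => (f x)^2) A := hint.mono_set hAsub
  have hintB : IntegrableOn (fun x => (f x)^2) B := hint.mono_set hBsub
  have hintAB : IntegrableOn (fun x => (f x)^2) (A ∩ B) := hintA.mono_set Set.inter_subset_left
  have hintAdB : IntegrableOn (fun x => (f x)^2) (A \ B) := hintA.mono_set Set.diff_subset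
  have hintBdA : IntegrableOn (fun x => (f x)^2) (B \ A) := hintB.mono_set Set.diff_subset
  have hBdAfin : volume (B \ A) ≠ ⊤ := hdiffeq ▸ hdifffin
  have hintconst : IntegrableOn (fun _ : E2 => (u R1)^2) (B \ A) :=
    (integrableOn_const_iff).mpr (Or.inr (lt_top_iff_ne_top.mpr hBdAfin))
  -- splitting
  have hsplitA : (∫ x in A, (f x)^2) = (∫ x in A ∩ B, (f x)^2) + ∫ x in A \ B, (f x)^2 := by
    rw [integral_inter_add_diff hBm hintA]
  have hsplitB : (∫ x in B, (f x)^2) = (∫ x in A ∩ B, (f x)^2) + ∫ x in B \ A, (f x)^2 := by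
    rw [Set.inter_comm, integral_inter_add_diff hAm hintB]
  -- constant value of the A \ B integral
  have hconstA : (∫ x in A \ B, (f x)^2) = (volume (A \ B)).toReal * (u R1)^2 := by
    rw [setIntegral_congr_fun (hAm.diff hBm) hfAB, setIntegral_const, smul_eq_mul, measureReal_def]
  -- RHS rewrite
  have hRHS : (∫ x in B, (u ‖x‖)^2) = ∫ x in B, (f x)^2 := setIntegral_congr_fun hBm hfB
  -- pointwise bound on B \ A
  have hptle : ∀ x ∈ B \ A, (f x)^2 ≤ (u R1)^2 := by
    intro x hx
    obtain ⟨ha, hb⟩ := hBnorm x hx.1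
    have hxm : ‖x‖ ∈ Set.Icc R0 R1 := ⟨ha.le, hb.le⟩
    have h1 : u ‖x‖ ≤ u R1 := hmono hxm (Set.right_mem_Icc.mpr hR01) hb.le
    have h2 : f x = u ‖x‖ := by
      rw [hf, if_neg (not_le.mpr ha), if_pos hb]
    rw [h2]
    exact pow_le_pow_left₀ (hnn _ hxm) h1 2
  have hBdAle : (∫ x in B \ A, (f x)^2) ≤ (volume (B \ A)).toReal * (u R1)^2 := by
    calc (∫ x in B \ A, (f x)^2) ≤ ∫ _x in B \ A, (u R1)^2 :=
          setIntegral_mono_on hintBdA hintconst (hBm.diff hAm) hptle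
      _ = (volume (B \ A)).toReal * (u R1)^2 := by rw [setIntegral_const, smul_eq_mul, measureReal_def]
  have hvolreal : (volume (B \ A)).toReal = (volume (A \ B)).toReal := by rw [hdiffeq]
  constructor
  · rw [ge_iff_le, hRHS, hsplitB, hsplitA, hconstA]
    exact add_le_add_right (hBdAle.trans (le_of_eq (by rw [hvolreal]))) _
  · intro hstrict hpos
    -- u R1 strict bound set up
    have hBdApos : 0 < volume (B \ A) := by
      rw [← hdiffeq, hADB]; exact hpos
    have hptlt : ∀ x ∈ B \ A, (f x)^2 < (u R1)^2 := by
      intro x hx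
      obtain ⟨ha, hb⟩ := hBnorm x hx.1
      have hxm : ‖x‖ ∈ Set.Icc R0 R1 := ⟨ha.le, hb.le⟩
      set t := (‖x‖ + R1) / 2 with htdef
      have ht1 : ‖x‖ < t := by rw [htdef]; linarith
      have ht2 : t < R1 := by rw [htdef]; linarith
      have htm : t ∈ Set.Ioo R0 R1 := ⟨ha.trans ht1, ht2⟩
      have h1 : u ‖x‖ < u t := hstrict ⟨ha, hb⟩ htm ht1
      have h2 : u t ≤ u R1 := hmono ⟨ha.le.trans ht1.le, ht2.le⟩ (Set.right_mem_Icc.mpr hR01) ht2.le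
      have h3 : f x = u ‖x‖ := by rw [hf, if_neg (not_le.mpr ha), if_pos hb]
      rw [h3]
      exact pow_lt_pow_left₀ (h1.trans_le h2) (hnn _ hxm) two_ne_zero
    -- strict integral inequality on B \ A
    have hkey : (∫ x in B \ A, (f x)^2) < (volume (B \ A)).toReal * (u R1)^2 := by
      have hg : IntegrableOn (fun x => (u R1)^2 - (f x)^2) (B \ A) := hintconst.sub hintBdA
      have hposint : 0 < ∫ x in B \ A, ((u R1)^2 - (f x)^2) := by
        rw [setIntegral_pos_iff_support_of_nonneg_ae]
        · refine hBdApos.trans_le (measure_mono ?_)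
          intro x hx
          exact ⟨fun h => (sub_pos.mpr (hptlt x hx)).ne' h, hx⟩
        · filter_upwards [ae_restrict_mem (hBm.diff hAm)] with x hx
          exact sub_nonneg.mpr (hptlt x hx).le
        · exact hg
      have := integral_sub hintconst hintBdA
      rw [integral_sub hintconst hintBdA, setIntegral_const, smul_eq_mul, measureReal_def] at hposint
      linarith
    rw [gt_iff_lt, hRHS, hsplitB, hsplitA, hconstA, hvolreal] at *
    exact add_lt_add_right hkey _
end

section
/- Let 0 < R0 < R1, Φ ≥ 0, and let u : [R0, R1] → ℝ be C¹ with the function U(r) = u'(r)² + (Φ²/r²) u(r)² nonincreasing on (R0, R1) and u'(R1) = 0. Let Ω₀* = {x ∈ ℝ² : R0 < |x| < R1}, and let Ω₀ = Ω \ closure(ω*) where ω* = {|x| < R0}, Ω is bounded measurable with |Ω| = πR1², and closure(ω*) ⊂ Ω. Define f(x) = u(|x|) for R0 < |x| < R1 and f(x) = u(R1) for |x| ≥ R1. Then ∫_{Ω₀} (|∇f|² + (Φ²/|x|²) f²) dx ≤ ∫_{Ω₀*} (|∇(u(|x|))|² + (Φ²/|x|²) u(|x|)²) dx. -/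
open MeasureTheory Metric

lemma hasFDerivAt_ucomp (u : ℝ → ℝ) (hu : ContDiff ℝ 1 u) (x : E2) (hx : x ≠ 0) :
    HasFDerivAt (fun y : E2 => u ‖y‖) ((deriv u ‖x‖ * ‖x‖⁻¹) • innerSL ℝ x) x := by
  have hnx : ‖x‖ ≠ 0 := norm_ne_zero_iff.mpr hx
  have h1 : HasFDerivAt (fun y : E2 => ‖y‖ ^ 2) (2 • (innerSL ℝ x)) x :=
    (hasStrictFDerivAt_norm_sq x).hasFDerivAt
  have h2 : HasFDerivAt (fun y : E2 => Real.sqrt (‖y‖ ^ 2))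
      ((1 / (2 * Real.sqrt (‖x‖ ^ 2))) • (2 • (innerSL ℝ x))) x :=
    h1.sqrt (by positivity)
  have heq : (fun y : E2 => Real.sqrt (‖y‖ ^ 2)) = fun y : E2 => ‖y‖ :=
    funext fun y => Real.sqrt_sq (norm_nonneg y)
  have h3 : HasFDerivAt (fun y : E2 => ‖y‖) (‖x‖⁻¹ • innerSL ℝ x) x := by
    rw [show (‖x‖⁻¹ • innerSL ℝ x : E2 →L[ℝ] ℝ)
        = (1 / (2 * Real.sqrt (‖x‖ ^ 2))) • (2 • innerSL ℝ x) by
      rw [Real.sqrt_sq (norm_nonneg x)]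
      ext y
      simp [two_smul]
      field_simp
      ring]
    exact heq ▸ h2
  have h4 : HasDerivAt u (deriv u ‖x‖) ‖x‖ :=
    ((hu.differentiable one_ne_zero) ‖x‖).hasDerivAt
  have := h4.comp_hasFDerivAt x h3
  rw [← smul_smul]
  exact this

lemma norm_fderiv_ucomp (u : ℝ → ℝ) (hu : ContDiff ℝ 1 u) (x : E2) (hx : x ≠ 0) :
    ‖fderiv ℝ (fun y : E2 => u ‖y‖) x‖ = |deriv u ‖x‖| := by
  have hnx : ‖x‖ ≠ 0 := norm_ne_zero_iff.mpr hx
  rw [(hasFDerivAt_ucomp u hu x hx).fderiv, norm_smul, innerSL_apply_norm]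
  rw [Real.norm_eq_abs, abs_mul, abs_inv, abs_norm]
  field_simp

lemma vol_ball2 (r : ℝ) (hr : 0 ≤ r) :
    volume (ball (0:E2) r) = ENNReal.ofReal (Real.pi * r^2) := by
  rw [EuclideanSpace.volume_ball]
  rw [show (Fintype.card (Fin 2)) = 2 by simp]
  rw [show ((2:ℕ):ℝ)/2 + 1 = 2 by norm_num, Real.Gamma_two,
    Real.sq_sqrt Real.pi_nonneg, div_one,
    ← ENNReal.ofReal_pow hr, ← ENNReal.ofReal_mul (by positivity), mul_comm]

theorem stmt_6 (R0 R1 Φ : ℝ) (hR0 : 0 < R0) (hR : R0 < R1) (hΦ : 0 ≤ Φ)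
    (u : ℝ → ℝ) (hu : ContDiff ℝ 1 u)
    (hUmono : AntitoneOn (fun r => (deriv u r)^2 + (Φ^2/r^2) * (u r)^2) (Set.Ioo R0 R1))
    (hN : deriv u R1 = 0)
    (Ω : Set E2) (hΩm : MeasurableSet Ω) (hΩb : Bornology.IsBounded Ω)
    (hsub : closure (ball (0:E2) R0) ⊆ Ω)
    (hvol : volume Ω = ENNReal.ofReal (Real.pi * R1^2))
    (f : E2 → ℝ)
    (hf : ∀ x, f x = if ‖x‖ < R1 then u ‖x‖ else u R1) :
    (∫ x in Ω \ closure (ball (0:E2) R0),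
        (‖fderiv ℝ f x‖^2 + (Φ^2/‖x‖^2) * (f x)^2)) ≤
    (∫ x in ball (0:E2) R1 \ closure (ball (0:E2) R0),
        (‖fderiv ℝ (fun y : E2 => u ‖y‖) x‖^2 + (Φ^2/‖x‖^2) * (u ‖x‖)^2)) := by
  have hR1 : (0:ℝ) < R1 := hR0.trans hR
  set U : ℝ → ℝ := fun r => (deriv u r)^2 + (Φ^2/r^2) * (u r)^2 with hUdef
  set C : Set E2 := closure (ball (0:E2) R0) with hCdef
  have hCeq : C = closedBall (0:E2) R0 := closure_ball 0 (ne_of_gt hR0)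
  set S : Set E2 := ball (0:E2) R1 \ C with hSdef
  set Ω₀ : Set E2 := Ω \ C with hΩ₀def
  have hCm : MeasurableSet C := isClosed_closure.measurableSet
  have hΩ₀m : MeasurableSet Ω₀ := hΩm.diff hCm
  have hSm : MeasurableSet S := measurableSet_ball.diff hCm
  set c : ℝ := Φ^2/R1^2 * (u R1)^2 with hcdef
  have hc0 : 0 ≤ c := by positivity
  have hUR1 : U R1 = c := by simp [hUdef, hN, hcdef]
  -- norms in the sets
  have hΩ₀n : ∀ x ∈ Ω₀, R0 < ‖x‖ := by
    intro x hx
    by_contra hle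
    exact hx.2 (hCeq ▸ mem_closedBall_zero_iff.mpr (not_lt.mp hle))
  have hSn : ∀ x ∈ S, R0 < ‖x‖ ∧ ‖x‖ < R1 := by
    intro x hx
    refine ⟨?_, mem_ball_zero_iff.mp hx.1⟩
    by_contra hle
    exact hx.2 (hCeq ▸ mem_closedBall_zero_iff.mpr (not_lt.mp hle))
  -- pointwise identities
  have key_g : ∀ x : E2, x ≠ 0 →
      ‖fderiv ℝ (fun y : E2 => u ‖y‖) x‖^2 + (Φ^2/‖x‖^2) * (u ‖x‖)^2 = U ‖x‖ := by
    intro x hx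
    rw [norm_fderiv_ucomp u hu x hx, sq_abs]
  have hf_lt : ∀ x : E2, ‖x‖ < R1 →
      fderiv ℝ f x = fderiv ℝ (fun y : E2 => u ‖y‖) x := by
    intro x hx
    apply Filter.EventuallyEq.fderiv_eq
    have ho : IsOpen {y : E2 | ‖y‖ < R1} := isOpen_lt continuous_norm continuous_const
    filter_upwards [ho.mem_nhds hx] with y hy
    rw [hf y, if_pos hy]
  have hf_gt : ∀ x : E2, R1 < ‖x‖ → fderiv ℝ f x = 0 := by
    intro x hx
    have ho : IsOpen {y : E2 | R1 < ‖y‖} := isOpen_lt continuous_const continuous_norm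
    have hev : f =ᶠ[nhds x] fun _ => u R1 := by
      filter_upwards [ho.mem_nhds hx] with y hy
      rw [hf y, if_neg (not_lt.mpr hy.le)]
    rw [hev.fderiv_eq, fderiv_fun_const]
    rfl
  have key_h_lt : ∀ x : E2, R0 < ‖x‖ → ‖x‖ < R1 →
      ‖fderiv ℝ f x‖^2 + (Φ^2/‖x‖^2) * (f x)^2 = U ‖x‖ := by
    intro x h0 h1
    rw [hf_lt x h1, hf x, if_pos h1, key_g x (by simp only [← norm_pos_iff]; linarith)]
  have key_h_gt : ∀ x : E2, R1 < ‖x‖ →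
      ‖fderiv ℝ f x‖^2 + (Φ^2/‖x‖^2) * (f x)^2 = (Φ^2/‖x‖^2) * (u R1)^2 := by
    intro x h1
    rw [hf_gt x h1, hf x, if_neg (not_lt.mpr h1.le)]
    simp
  have key_h_le_c : ∀ x : E2, R1 < ‖x‖ →
      ‖fderiv ℝ f x‖^2 + (Φ^2/‖x‖^2) * (f x)^2 ≤ c := by
    intro x h1
    rw [key_h_gt x h1, hcdef]
    have h2 : R1 ^ 2 ≤ ‖x‖ ^ 2 := by nlinarith
    gcongr
  -- continuity of U away from 0
  have hdc : Continuous (deriv u) := hu.continuous_deriv le_rfl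
  have hUcont : ContinuousOn U {r : ℝ | r ≠ 0} := by
    apply ContinuousOn.add
    · exact ((hdc.continuousOn).pow 2)
    · exact (continuousOn_const.div ((continuous_pow 2).continuousOn)
        (fun r hr => pow_ne_zero 2 hr)).mul ((hu.continuous.continuousOn).pow 2)
  have hU_ge : ∀ r ∈ Set.Ioo R0 R1, c ≤ U r := by
    intro r hr
    rw [← hUR1]
    have hne : (nhdsWithin R1 (Set.Ioo r R1)).NeBot := by
      rw [← mem_closure_iff_nhdsWithin_neBot, closure_Ioo (ne_of_lt hr.2)]
      exact ⟨hr.2.le, le_rfl⟩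
    have hca : ContinuousAt U R1 :=
      hUcont.continuousAt (isOpen_compl_singleton.mem_nhds (by simp; linarith))
    have ht : Filter.Tendsto U (nhdsWithin R1 (Set.Ioo r R1)) (nhds (U R1)) :=
      hca.tendsto.mono_left nhdsWithin_le_nhds
    refine le_of_tendsto ht ?_
    filter_upwards [self_mem_nhdsWithin] with s hs
    exact hUmono hr ⟨hr.1.trans hs.1, hs.2⟩ hs.1.le
  -- measure facts
  have hvC : volume C = ENNReal.ofReal (Real.pi * R0^2) := by
    rw [hCeq, MeasureTheory.Measure.addHaar_closedBall_eq_addHaar_ball, vol_ball2 R0 hR0.le]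
  have hCsub : C ⊆ ball (0:E2) R1 := hCeq ▸ closedBall_subset_ball hR
  have hμΩ₀S : volume Ω₀ = volume S := by
    rw [hΩ₀def, hSdef, measure_diff hsub hCm.nullMeasurableSet (by rw [hvC]; exact ENNReal.ofReal_ne_top),
      measure_diff hCsub hCm.nullMeasurableSet (by rw [hvC]; exact ENNReal.ofReal_ne_top),
      hvol, vol_ball2 R1 hR1.le]
  have hSfin : volume S ≠ ⊤ :=
    ne_top_of_le_ne_top (by rw [vol_ball2 R1 hR1.le]; exact ENNReal.ofReal_ne_top)
      (measure_mono Set.diff_subset)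
  have hΩ₀fin : volume Ω₀ ≠ ⊤ := by rw [hμΩ₀S]; exact hSfin
  have hμB : volume (Ω₀ \ S) = volume (S \ Ω₀) := by
    have h1 : volume (Ω₀ ∩ S) + volume (Ω₀ \ S) = volume Ω₀ := measure_inter_add_diff Ω₀ hSm
    have h2 : volume (S ∩ Ω₀) + volume (S \ Ω₀) = volume S := measure_inter_add_diff S hΩ₀m
    rw [Set.inter_comm] at h2
    have hfin : volume (Ω₀ ∩ S) ≠ ⊤ :=
      ne_top_of_le_ne_top hΩ₀fin (measure_mono Set.inter_subset_left)
    have : volume (Ω₀ ∩ S) + volume (Ω₀ \ S) = volume (Ω₀ ∩ S) + volume (S \ Ω₀) := by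
      rw [h1, h2, hμΩ₀S]
    exact (ENNReal.add_right_inj hfin).mp this
  -- bound for U on the annulus
  obtain ⟨M, hM⟩ : ∃ M, ∀ r ∈ Set.Icc R0 R1, ‖U r‖ ≤ M :=
    isCompact_Icc.exists_bound_of_continuousOn
      (hUcont.mono (fun r hr => by simp only [Set.mem_setOf_eq]; intro h; rw [h] at hr; exact absurd hr.1 (by linarith)))
  -- integrability of g on S
  have hKsub : S ⊆ closedBall (0:E2) R1 \ ball (0:E2) R0 :=
    Set.diff_subset_diff ball_subset_closedBall (hCdef ▸ subset_closure)
  have hgK : IntegrableOn (fun x : E2 => U ‖x‖) (closedBall (0:E2) R1 \ ball (0:E2) R0) := by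
    apply ContinuousOn.integrableOn_compact ((isCompact_closedBall _ _).diff isOpen_ball)
    apply hUcont.comp continuous_norm.continuousOn
    intro x hx
    simp only [Set.mem_setOf_eq]
    have : R0 ≤ ‖x‖ := by
      by_contra hlt
      exact hx.2 (mem_ball_zero_iff.mpr (not_le.mp hlt))
    intro h; rw [h] at this; linarith
  have hgint : IntegrableOn
      (fun x : E2 => ‖fderiv ℝ (fun y : E2 => u ‖y‖) x‖^2 + (Φ^2/‖x‖^2) * (u ‖x‖)^2) S := by
    apply (hgK.mono_set hKsub).congr_fun _ hSm
    intro x hx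
    exact (key_g x (by have := (hSn x hx).1; simp only [← norm_pos_iff]; linarith)).symm
  -- measurability of h
  have hfm : Measurable f := by
    rw [show f = fun x => if ‖x‖ < R1 then u ‖x‖ else u R1 from funext hf]
    exact Measurable.ite (measurableSet_lt measurable_norm measurable_const)
      ((hu.continuous.comp continuous_norm).measurable) measurable_const
  have hhm : Measurable (fun x : E2 => ‖fderiv ℝ f x‖^2 + (Φ^2/‖x‖^2) * (f x)^2) := by
    apply Measurable.add
    · exact ((measurable_fderiv ℝ f).norm).pow_const 2
    · exact (measurable_const.div (measurable_norm.pow_const 2)).mul (hfm.pow_const 2)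
  -- a.e. facts
  have hsph : ∀ᵐ x : E2 ∂volume, ‖x‖ ≠ R1 := by
    have h0 : volume (sphere (0:E2) R1) = 0 := Measure.addHaar_sphere volume 0 R1
    have := measure_eq_zero_iff_ae_notMem.mp h0
    filter_upwards [this] with x hx hc
    exact hx (mem_sphere_zero_iff_norm.mpr hc)
  -- integrability of h on Ω₀
  have hhint : IntegrableOn (fun x : E2 => ‖fderiv ℝ f x‖^2 + (Φ^2/‖x‖^2) * (f x)^2) Ω₀ := by
    apply Measure.integrableOn_of_bounded (M := max M c) hΩ₀fin hhm.aestronglyMeasurable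
    filter_upwards [ae_restrict_mem hΩ₀m, ae_restrict_of_ae hsph] with x hx hxs
    have h0 := hΩ₀n x hx
    rcases lt_or_gt_of_ne hxs with hlt | hgt
    · rw [Real.norm_eq_abs, key_h_lt x h0 hlt]
      exact le_trans (hM _ ⟨h0.le, hlt.le⟩) (le_max_left _ _)
    · rw [Real.norm_eq_abs, abs_of_nonneg (by rw [key_h_gt x hgt]; positivity)]
      exact le_trans (key_h_le_c x hgt) (le_max_right _ _)
  -- split the integrals
  rw [← integral_inter_add_diff (f := fun x : E2 => ‖fderiv ℝ f x‖^2 + (Φ^2/‖x‖^2) * (f x)^2)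
      hSm hhint,
    ← integral_inter_add_diff (f := fun x : E2 =>
      ‖fderiv ℝ (fun y : E2 => u ‖y‖) x‖^2 + (Φ^2/‖x‖^2) * (u ‖x‖)^2) hΩ₀m hgint]
  have hAeq : (∫ x in Ω₀ ∩ S, (‖fderiv ℝ f x‖^2 + (Φ^2/‖x‖^2) * (f x)^2))
      = ∫ x in S ∩ Ω₀, (‖fderiv ℝ (fun y : E2 => u ‖y‖) x‖^2 + (Φ^2/‖x‖^2) * (u ‖x‖)^2) := by
    rw [Set.inter_comm]
    apply setIntegral_congr_fun (hSm.inter hΩ₀m)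
    intro x hx
    obtain ⟨h0, h1⟩ := hSn x hx.1
    dsimp only
    rw [key_h_lt x h0 h1, key_g x (by simp only [← norm_pos_iff]; linarith)]
  have hB1 : (∫ x in Ω₀ \ S, (‖fderiv ℝ f x‖^2 + (Φ^2/‖x‖^2) * (f x)^2))
      ≤ c * (volume (Ω₀ \ S)).toReal := by
    have hle : ∀ᵐ x ∂(volume.restrict (Ω₀ \ S)),
        ‖fderiv ℝ f x‖^2 + (Φ^2/‖x‖^2) * (f x)^2 ≤ c := by
      filter_upwards [ae_restrict_mem (hΩ₀m.diff hSm), ae_restrict_of_ae hsph] with x hx hxs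
      have h0 := hΩ₀n x hx.1
      have hge : R1 < ‖x‖ := by
        rcases lt_or_gt_of_ne hxs with hlt | hgt
        · exact absurd ⟨mem_ball_zero_iff.mpr hlt, hx.1.2⟩ hx.2
        · exact hgt
      exact key_h_le_c x hge
    calc (∫ x in Ω₀ \ S, (‖fderiv ℝ f x‖^2 + (Φ^2/‖x‖^2) * (f x)^2))
        ≤ ∫ _x in Ω₀ \ S, c :=
          integral_mono_ae (hhint.mono_set Set.diff_subset) ((integrableOn_const_iff (C := c)).mpr
            (Or.inr (lt_of_le_of_lt (le_of_eq (measure_congr (by rfl)).symm) (lt_of_le_of_ne (le_top) (by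
              exact ne_top_of_le_ne_top hΩ₀fin (measure_mono Set.diff_subset)))))) hle
      _ = c * (volume (Ω₀ \ S)).toReal := by rw [setIntegral_const, smul_eq_mul, mul_comm]; rfl
  have hB2 : c * (volume (S \ Ω₀)).toReal
      ≤ ∫ x in S \ Ω₀, (‖fderiv ℝ (fun y : E2 => u ‖y‖) x‖^2 + (Φ^2/‖x‖^2) * (u ‖x‖)^2) := by
    have hge : ∀ x ∈ S \ Ω₀,
        c ≤ ‖fderiv ℝ (fun y : E2 => u ‖y‖) x‖^2 + (Φ^2/‖x‖^2) * (u ‖x‖)^2 := by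
      intro x hx
      obtain ⟨h0, h1⟩ := hSn x hx.1
      rw [key_g x (by simp only [← norm_pos_iff]; linarith)]
      exact hU_ge ‖x‖ ⟨h0, h1⟩
    calc c * (volume (S \ Ω₀)).toReal = ∫ _x in S \ Ω₀, c := by
          rw [setIntegral_const, smul_eq_mul, mul_comm]; rfl
      _ ≤ _ := by
          apply integral_mono_ae ((integrableOn_const_iff (C := c)).mpr (Or.inr
            (lt_of_le_of_ne le_top (ne_top_of_le_ne_top hSfin (measure_mono Set.diff_subset)))))
            (hgint.mono_set Set.diff_subset)
          filter_upwards [ae_restrict_mem (hSm.diff hΩ₀m)] with x hx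
          exact hge x hx
  rw [hμB] at hB1
  linarith [hAeq, hB1, hB2]
end

section
/- Let 0 < R0 < R1, Φ ∈ [0, 1/2], and let u be the positive, radially nondecreasing ground state of the operator -d²/dr² - (1/r)d/dr + Φ²/r² on L²((R0,R1); r dr) with Dirichlet condition at R0 and Neumann condition at R1, with eigenvalue μ0 > 0. Then for every r ∈ (R0, R1), u'(r)² + (Φ²/r²) u(r)² ≥ (Φ²/R1²) u(R1)². -/
open Set

private lemma monoOn_deriv_nonneg {u : ℝ → ℝ} {a b x : ℝ} (hu : DifferentiableAt ℝ u x)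
    (hm : MonotoneOn u (Set.Icc a b)) (hx : x ∈ Set.Ioo a b) : 0 ≤ deriv u x := by
  have h := hu.hasDerivAt
  rw [hasDerivAt_iff_tendsto_slope] at h
  have h' : Filter.Tendsto (slope u x) (nhdsWithin x (Set.Ioi x)) (nhds (deriv u x)) :=
    h.mono_left (nhdsWithin_mono x (fun y hy => Set.mem_compl_singleton_iff.mpr (ne_of_gt hy)))
  refine ge_of_tendsto h' ?_
  filter_upwards [Ioo_mem_nhdsGT_of_mem ⟨le_refl x, hx.2⟩] with y hy
  have : u x ≤ u y := hm ⟨hx.1.le, hx.2.le⟩ ⟨(hx.1.trans hy.1).le, hy.2.le⟩ hy.1.le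
  rw [slope_def_field]
  exact div_nonneg (by linarith) (by linarith [hy.1])

private lemma hasDerivAt_U {u : ℝ → ℝ} {Φ x : ℝ} (hx : x ≠ 0)
    (h1 : HasDerivAt u (deriv u x) x) (h2 : HasDerivAt (deriv u) (deriv (deriv u) x) x) :
    HasDerivAt (fun y => (deriv u y)^2 + Φ^2/y^2 * (u y)^2)
      (2 * deriv u x * deriv (deriv u) x
        + (Φ^2 * (-(2*x) / (x^2)^2)) * (u x)^2 + Φ^2/x^2 * (2 * u x * deriv u x)) x := by
  have hA : HasDerivAt (fun y => (deriv u y)^2) (2 * deriv u x * deriv (deriv u) x) x := by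
    simpa [mul_comm] using h2.fun_pow 2
  have hB : HasDerivAt (fun y : ℝ => Φ^2/y^2) (Φ^2 * (-(2*x) / (x^2)^2)) x := by
    have := ((hasDerivAt_pow 2 x).inv (pow_ne_zero 2 hx)).const_mul (Φ^2)
    simpa [div_eq_mul_inv, pow_one] using this
  have hC : HasDerivAt (fun y => (u y)^2) (2 * u x * deriv u x) x := by
    simpa [mul_comm] using h1.fun_pow 2
  have := hA.fun_add (hB.fun_mul hC)
  refine this.congr_deriv ?_
  ring

theorem stmt_11 (R0 R1 Φ μ0 : ℝ) (hR0 : 0 < R0) (hR : R0 < R1)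
    (hΦ : Φ ∈ Set.Icc (0:ℝ) (1/2)) (hμ0 : 0 < μ0)
    (u : ℝ → ℝ) (hu : ContDiff ℝ 2 u)
    (hode : ∀ r ∈ Set.Ioo R0 R1,
      -(deriv (deriv u) r) - (1/r) * deriv u r + (Φ^2/r^2) * u r = μ0 * u r)
    (hD : u R0 = 0) (hN : deriv u R1 = 0)
    (hpos : ∀ r ∈ Set.Ioo R0 R1, 0 < u r)
    (hmono : MonotoneOn u (Set.Icc R0 R1)) :
    ∀ r ∈ Set.Ioo R0 R1,
      (Φ^2 / R1^2) * (u R1)^2 ≤ (deriv u r)^2 + (Φ^2/r^2) * (u r)^2 := by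
  -- basic regularity
  have h2' : ContDiff ℝ ((1:ℕ∞)+1) u := by exact_mod_cast hu
  rw [contDiff_succ_iff_deriv] at h2'
  have hdiff : Differentiable ℝ u := h2'.1
  have hd1 : ContDiff ℝ 1 (deriv u) := by exact_mod_cast h2'.2.2
  have hdiff' : Differentiable ℝ (deriv u) := hd1.differentiable one_ne_zero
  have hΦ2 : Φ^2 ≤ 1 := by
    nlinarith [hΦ.1, hΦ.2]
  set U : ℝ → ℝ := fun y => (deriv u y)^2 + Φ^2/y^2 * (u y)^2 with hU
  intro r hr
  -- the derivative of U is nonpositive on (R0, R1)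
  have key : ∀ x ∈ Set.Ioo R0 R1, HasDerivAt U (deriv U x) x ∧ deriv U x ≤ 0 := by
    intro x hx
    have hx0 : 0 < x := hR0.trans hx.1
    have hD' := hasDerivAt_U (Φ := Φ) (ne_of_gt hx0) (hdiff x).hasDerivAt
      (hdiff' x).hasDerivAt
    have hder : deriv U x = 2 * deriv u x * deriv (deriv u) x
        + (Φ^2 * (-(2*x) / (x^2)^2)) * (u x)^2 + Φ^2/x^2 * (2 * u x * deriv u x) :=
      hD'.deriv
    refine ⟨hder ▸ hD', ?_⟩
    rw [hder]
    have hode' := hode x hx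
    have hupos := hpos x hx
    have hu' : 0 ≤ deriv u x := monoOn_deriv_nonneg (hdiff x) hmono hx
    have hdd : deriv (deriv u) x = -(1/x) * deriv u x + (Φ^2/x^2) * u x - μ0 * u x := by
      linarith
    rw [hdd]
    set a := deriv u x
    set c := u x
    have e1 : 2 * a * (-(1/x) * a + Φ^2/x^2 * c - μ0 * c)
        + (Φ^2 * (-(2*x) / (x^2)^2)) * c^2 + Φ^2/x^2 * (2 * c * a)
        = -(2/x) * ((1-Φ^2)*a^2 + Φ^2*(a - c/x)^2) - 2*μ0*a*c := by
      field_simp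
      ring
    rw [e1]
    have t1 : 0 ≤ (2/x) * ((1-Φ^2)*a^2 + Φ^2*(a - c/x)^2) := by
      apply mul_nonneg (by positivity)
      have := sq_nonneg (a - c/x)
      have := sq_nonneg a
      nlinarith
    nlinarith [mul_nonneg hu' hupos.le]
  -- U is antitone on [r, R1]
  have hrR1 : r < R1 := hr.2
  have hanti : AntitoneOn U (Set.Icc r R1) := by
    apply antitoneOn_of_deriv_nonpos (convex_Icc r R1)
    · -- continuity
      apply ContinuousOn.add
      · exact ((hd1.continuous.pow 2)).continuousOn
      · apply ContinuousOn.mul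
        · apply ContinuousOn.div continuousOn_const (continuous_pow 2).continuousOn
          intro y hy
          have : 0 < y := lt_of_lt_of_le (hR0.trans hr.1) hy.1
          positivity
        · exact ((hdiff.continuous.pow 2)).continuousOn
    · intro x hx
      rw [interior_Icc] at hx
      have hx' : x ∈ Set.Ioo R0 R1 := ⟨hr.1.trans hx.1, hx.2⟩
      exact ((key x hx').1).differentiableAt.differentiableWithinAt
    · intro x hx
      rw [interior_Icc] at hx
      have hx' : x ∈ Set.Ioo R0 R1 := ⟨hr.1.trans hx.1, hx.2⟩
      exact (key x hx').2
  have h := hanti (Set.left_mem_Icc.mpr hrR1.le) (Set.right_mem_Icc.mpr hrR1.le) hrR1.le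
  have hUR1 : U R1 = Φ^2/R1^2 * (u R1)^2 := by
    simp [hU, hN]
  rw [hUR1] at h
  calc (Φ^2 / R1^2) * (u R1)^2 = Φ^2/R1^2 * (u R1)^2 := by ring
    _ ≤ U r := h
    _ = (deriv u r)^2 + (Φ^2/r^2) * (u r)^2 := by simp [hU]
end

section
/- Let 0 < R0 < R1, Φ ∈ (0, 1/2], λ > 0, and let u be a C² positive solution of -u'' - (1/r)u' + (Φ²/r²)u = λu on (R0, R1) with u'(R0) = u'(R1) = 0, extended continuously to [R0, R1]. Define U(r) = u'(r)² + (Φ²/r²)u(r)². Then U is strictly decreasing on (R0, R1); in particular U(r) > U(R1) = (Φ²/R1²) u(R1)² for all r ∈ (R0, R1). -/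
set_option maxHeartbeats 1000000

theorem stmt_14 (R0 R1 Φ lam : ℝ) (hR0 : 0 < R0) (hR : R0 < R1)
    (hΦ : Φ ∈ Set.Ioc (0:ℝ) (1/2)) (hlam : 0 < lam)
    (u : ℝ → ℝ) (hu : ContDiff ℝ 2 u)
    (hode : ∀ r ∈ Set.Ioo R0 R1,
      -(deriv (deriv u) r) - (1/r) * deriv u r + (Φ^2/r^2) * u r = lam * u r)
    (hN0 : deriv u R0 = 0) (hN1 : deriv u R1 = 0)
    (hpos : ∀ r ∈ Set.Ioo R0 R1, 0 < u r)
    (U : ℝ → ℝ) (hU : ∀ r, U r = (deriv u r)^2 + (Φ^2/r^2) * (u r)^2) :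
    StrictAntiOn U (Set.Ioo R0 R1) ∧
    U R1 = (Φ^2/R1^2) * (u R1)^2 ∧
    ∀ r ∈ Set.Ioo R0 R1, U R1 < U r := by
  obtain ⟨hΦ0, hΦh⟩ := hΦ
  have hcont_u : Continuous u := hu.continuous
  have hcont_u' : Continuous (deriv u) := hu.continuous_deriv one_le_two
  have hdiff_u : ∀ x : ℝ, HasDerivAt u (deriv u x) x :=
    fun x => ((hu.differentiable two_ne_zero) x).hasDerivAt
  have hu1 : ContDiff ℝ 1 (deriv u) := by
    have h2 : (2 : WithTop ℕ∞) = 1 + 1 := by norm_num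
    rw [h2] at hu
    exact (contDiff_succ_iff_deriv.mp hu).2.2
  have hdiff_u' : ∀ x : ℝ, HasDerivAt (deriv u) (deriv (deriv u) x) x :=
    fun x => ((hu1.differentiable one_ne_zero) x).hasDerivAt
  -- rearranged ODE
  have hode' : ∀ x ∈ Set.Ioo R0 R1,
      deriv (deriv u) x = -(1/x) * deriv u x + (Φ^2/x^2) * u x - lam * u x := by
    intro x hx
    have := hode x hx
    linarith
  -- derivative of N(r) = r u'(r)
  have hNderiv : ∀ x ∈ Set.Ioo R0 R1,
      HasDerivAt (fun y => y * deriv u y) ((Φ^2 - lam * x^2)/x * u x) x := by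
    intro x hx
    have hx0 : 0 < x := hR0.trans hx.1
    have h : HasDerivAt (fun y => y * deriv u y) (1 * deriv u x + x * deriv (deriv u) x) x :=
      (hasDerivAt_id x).fun_mul (hdiff_u' x)
    convert h using 1
    rw [hode' x hx]
    field_simp
    ring
  have hNcont : Continuous (fun y => y * deriv u y) := continuous_id.mul hcont_u'
  -- u' ≥ 0 on the open interval
  have hsign : ∀ r ∈ Set.Ioo R0 R1, 0 ≤ deriv u r := by
    by_contra hcon
    push_neg at hcon
    obtain ⟨s, hs, hneg⟩ := hcon
    have hs0 : 0 < s := hR0.trans hs.1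
    have hNs : s * deriv u s < 0 := mul_neg_of_pos_of_neg hs0 hneg
    rcases le_or_gt (lam * s^2) (Φ^2) with hc | hc
    · have hmono : StrictMonoOn (fun y => y * deriv u y) (Set.Icc R0 s) := by
        apply strictMonoOn_of_deriv_pos (convex_Icc _ _) hNcont.continuousOn
        intro x hx
        rw [interior_Icc] at hx
        have hxI : x ∈ Set.Ioo R0 R1 := ⟨hx.1, hx.2.trans hs.2⟩
        have hx0 : 0 < x := hR0.trans hx.1
        rw [(hNderiv x hxI).deriv]
        have hx2s : x^2 < s^2 := by
          nlinarith [mul_pos (sub_pos.mpr hx.2) (show (0:ℝ) < s + x by linarith)]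
        have hxs : lam * x^2 < Φ^2 :=
          lt_of_lt_of_le (by nlinarith [mul_lt_mul_of_pos_left hx2s hlam]) hc
        exact mul_pos (div_pos (by linarith) hx0) (hpos x hxI)
      have := hmono ⟨le_rfl, hs.1.le⟩ ⟨hs.1.le, le_rfl⟩ hs.1
      simp only [hN0, mul_zero] at this
      linarith
    · have hanti : StrictAntiOn (fun y => y * deriv u y) (Set.Icc s R1) := by
        apply strictAntiOn_of_deriv_neg (convex_Icc _ _) hNcont.continuousOn
        intro x hx
        rw [interior_Icc] at hx
        have hxI : x ∈ Set.Ioo R0 R1 := ⟨hs.1.trans hx.1, hx.2⟩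
        have hx0 : 0 < x := hR0.trans hxI.1
        rw [(hNderiv x hxI).deriv]
        have hx2s : s^2 < x^2 := by
          nlinarith [mul_pos (sub_pos.mpr hx.1) (show (0:ℝ) < x + s by linarith)]
        have hxs : Φ^2 < lam * x^2 :=
          lt_of_lt_of_le hc (by nlinarith [mul_lt_mul_of_pos_left hx2s hlam])
        exact mul_neg_of_neg_of_pos (div_neg_of_neg_of_pos (by linarith) hx0) (hpos x hxI)
      have := hanti ⟨le_rfl, hs.2.le⟩ ⟨hs.2.le, le_rfl⟩ hs.2
      simp only [hN1, mul_zero] at this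
      linarith
  have hUeq : U = fun r => (deriv u r)^2 + (Φ^2/r^2) * (u r)^2 := funext hU
  -- derivative of U is negative on the open interval
  have hUneg : ∀ r ∈ Set.Ioo R0 R1, deriv U r < 0 := by
    intro r hr
    have hr0 : 0 < r := hR0.trans hr.1
    have hur : 0 < u r := hpos r hr
    have hu'r : 0 ≤ deriv u r := hsign r hr
    have h1 : HasDerivAt (fun x => (deriv u x)^2)
        (2 * deriv u r * deriv (deriv u) r) r := by
      simpa using (hdiff_u' r).fun_pow 2
    have hx2 : HasDerivAt (fun x : ℝ => x^2) (2*r) r := by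
      simpa using hasDerivAt_pow 2 r
    have h2 : HasDerivAt (fun x : ℝ => Φ^2 / x^2) (Φ^2 * (-(2*r) / (r^2)^2)) r := by
      have h := (hx2.inv (by positivity)).const_mul (Φ^2)
      simpa [div_eq_mul_inv] using h
    have h3 : HasDerivAt (fun x => (u x)^2) (2 * u r * deriv u r) r := by
      simpa using (hdiff_u r).fun_pow 2
    have h4 := h2.mul h3
    have hUd : HasDerivAt U
        (2 * deriv u r * deriv (deriv u) r +
          (Φ^2 * (-(2*r) / (r^2)^2) * (u r)^2 + Φ^2/r^2 * (2 * u r * deriv u r))) r := by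
      rw [hUeq]
      exact h1.add h4
    rw [hUd.deriv, hode' r hr]
    set a := deriv u r with ha
    set v := u r with hv
    have key : (2 * a * (-(1/r) * a + Φ^2/r^2 * v - lam * v) +
        (Φ^2 * (-(2*r) / (r^2)^2) * v^2 + Φ^2/r^2 * (2 * v * a))) * r^3 =
        -2*a^2*r^2*(1-Φ^2) - 2*Φ^2*(v - a*r)^2 - 2*lam*a*v*r^3 := by
      field_simp
      ring
    have hΦ2 : Φ^2 ≤ 1/4 := by nlinarith
    have hrhs : -2*a^2*r^2*(1-Φ^2) - 2*Φ^2*(v - a*r)^2 - 2*lam*a*v*r^3 < 0 := by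
      rcases eq_or_lt_of_le hu'r with h | h
      · rw [← h]
        have : 0 < Φ^2 * v^2 := by positivity
        nlinarith
      · nlinarith [sq_nonneg (v - a*r), mul_pos (mul_pos hlam h) (mul_pos hur (pow_pos hr0 3)),
          mul_nonneg (mul_nonneg (sq_nonneg a) (sq_nonneg r)) (by linarith : (0:ℝ) ≤ 1 - Φ^2)]
    have hE3 : (2 * a * (-(1/r) * a + Φ^2/r^2 * v - lam * v) +
        (Φ^2 * (-(2*r) / (r^2)^2) * v^2 + Φ^2/r^2 * (2 * v * a))) * r^3 < 0 := by
      rw [key]; exact hrhs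
    have hr3 : (0:ℝ) < r^3 := pow_pos hr0 3
    by_contra hge
    push_neg at hge
    nlinarith [mul_nonneg hge hr3.le]
  -- continuity of U away from 0
  have hUcont : ContinuousOn U {x : ℝ | 0 < x} := by
    rw [hUeq]
    apply ContinuousOn.add
    · exact (hcont_u'.pow 2).continuousOn
    · exact (continuousOn_const.div ((continuous_pow 2).continuousOn)
        (fun x hx => pow_ne_zero 2 (ne_of_gt hx))).mul ((hcont_u.pow 2).continuousOn)
  have hsub : Set.Ioo R0 R1 ⊆ {x : ℝ | 0 < x} := fun x hx => hR0.trans hx.1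
  have hA : StrictAntiOn U (Set.Ioo R0 R1) := by
    apply strictAntiOn_of_deriv_neg (convex_Ioo _ _) (hUcont.mono hsub)
    intro x hx
    rw [interior_Ioo] at hx
    exact hUneg x hx
  refine ⟨hA, by rw [hU R1, hN1]; ring, ?_⟩
  intro r hr
  have hanti : StrictAntiOn U (Set.Icc r R1) := by
    apply strictAntiOn_of_deriv_neg (convex_Icc _ _)
      (hUcont.mono (fun x hx => (hR0.trans hr.1).trans_le hx.1))
    intro x hx
    rw [interior_Icc] at hx
    exact hUneg x ⟨hr.1.trans hx.1, hx.2⟩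
  exact hanti ⟨le_rfl, hr.2.le⟩ ⟨hr.2.le, le_rfl⟩ hr.2
end
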